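/- Let X ⊂ S² be the 12-point vertex set of the cuboctahedron (the quasi-regular polyhedron of vertex type [3,4,3,4]) inscribed in the unit sphere, consisting of all vectors with one coordinate 0 and the other two coordinates ±1/√2; its maximum pairwise inner product is α = 1/2. Then for every unit vector y ∈ S² with y ∉ X, there exists x ∈ X with ⟨x,y⟩ > 1/2; i.e., adjoining any new point of S² to X strictly increases the maximum pairwise inner product. -/

import Mathlib

open scoped RealInnerProductSpace

/-- The golden ratio `(1 + √5)/2`. -/
noncomputable def gr : ℝ := (1 + Real.sqrt 5) / 2

/-- Vertex set of the cuboctahedron (the quasi-regular polyhedron of vertex type `[3,4,3,4]`)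
inscribed in the unit sphere: all vectors with one coordinate `0` and the other two `±1/√2`. -/
noncomputable def cuboctahedron : Set (EuclideanSpace ℝ (Fin 3)) :=
  {v | ∃ i, v i = 0 ∧ ∀ j, j ≠ i → (v j = (Real.sqrt 2)⁻¹ ∨ v j = -(Real.sqrt 2)⁻¹)}

/-!
Coordinates of vertices lie in `{0, ±1/√2}`, so for distinct vertices `x, y` every product
`x k * y k` is at most `1/2`, and at least two of them are `≤ 0`: the zero coordinates of `x` and
of `y` if these differ, otherwise the common zero coordinate and one where `x` and `y` have
opposite signs.

If a unit vector `y` had `⟪x, y⟫ ≤ 1/2` for every vertex `x`, then testing against the three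
vertices whose signs match those of `y` gives `|y j| + |y k| ≤ 1/√2` for each pair `j ≠ k`.
Squaring and summing over the pairs yields `2 = 2 ∑ |y k|² ≤ ∑ (|y j| + |y k|)² ≤ 3/2`.
-/

lemma inv_sqrt_two_mul_self : (√2)⁻¹ * (√2)⁻¹ = (1 / 2 : ℝ) := by
  rw [← mul_inv, Real.mul_self_sqrt zero_le_two, one_div]

lemma apply_of_mem_cuboctahedron {v : EuclideanSpace ℝ (Fin 3)} (hv : v ∈ cuboctahedron)
    (k : Fin 3) : v k = 0 ∨ v k = (√2)⁻¹ ∨ v k = -(√2)⁻¹ := by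
  obtain ⟨i, hi, hv⟩ := hv
  by_cases hk : k = i
  · exact .inl (hk ▸ hi)
  · exact .inr (hv k hk)

lemma mul_apply_le_half_of_mem_cuboctahedron {x y : EuclideanSpace ℝ (Fin 3)}
    (hx : x ∈ cuboctahedron) (hy : y ∈ cuboctahedron) (k : Fin 3) :
    x k * y k ≤ 1 / 2 ∧ (x k ≠ y k → x k * y k ≤ 0) := by
  have hc := inv_sqrt_two_mul_self
  rcases apply_of_mem_cuboctahedron hx k with h | h | h <;>
    rcases apply_of_mem_cuboctahedron hy k with h' | h' | h' <;>
    simp only [h, h', zero_mul, mul_zero, neg_mul, mul_neg, neg_neg, hc] <;> norm_num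

lemma sum_fin_three_le_of_two_nonpos {p : Fin 3 → ℝ} (hp : ∀ k, p k ≤ 1 / 2) {a b : Fin 3}
    (hab : a ≠ b) (ha : p a ≤ 0) (hb : p b ≤ 0) : ∑ k, p k ≤ 1 / 2 := by
  rw [Fin.sum_univ_three]
  fin_cases a <;> fin_cases b <;> simp_all <;> linarith [hp 0, hp 1, hp 2]

lemma inner_le_half_of_mem_cuboctahedron {x y : EuclideanSpace ℝ (Fin 3)}
    (hx : x ∈ cuboctahedron) (hy : y ∈ cuboctahedron) (hxy : x ≠ y) : ⟪x, y⟫ ≤ 1 / 2 := by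
  have hp := mul_apply_le_half_of_mem_cuboctahedron hx hy
  obtain ⟨i, hxi, -⟩ := hx
  obtain ⟨j, hyj, -⟩ := hy
  rw [PiLp.inner_apply]
  simp only [Real.inner_apply]
  by_cases hij : i = j
  · subst hij
    obtain ⟨k, hk⟩ : ∃ k, x k ≠ y k := by
      by_contra! h
      exact hxy (PiLp.ext h)
    have hki : k ≠ i := by rintro rfl; exact hk (hxi.trans hyj.symm)
    exact sum_fin_three_le_of_two_nonpos (fun k => (hp k).1) hki ((hp k).2 hk) (by simp [hxi])
  · exact sum_fin_three_le_of_two_nonpos (fun k => (hp k).1) hij (by simp [hxi]) (by simp [hyj])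

lemma exists_mem_cuboctahedron_inner_eq_half :
    ∃ x ∈ cuboctahedron, ∃ y ∈ cuboctahedron, x ≠ y ∧ ⟪x, y⟫ = 1 / 2 := by
  refine ⟨!₂[0, (√2)⁻¹, (√2)⁻¹], ⟨0, rfl, ?_⟩, !₂[(√2)⁻¹, 0, (√2)⁻¹], ⟨1, rfl, ?_⟩, ?_, ?_⟩
  · intro j hj; fin_cases j <;> simp_all
  · intro j hj; fin_cases j <;> simp_all
  · intro h
    have := congrArg (· 0) h
    norm_num at this
    exact absurd this.symm (by positivity)
  · simp [PiLp.inner_apply, Fin.sum_univ_three, inv_sqrt_two_mul_self]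

noncomputable def signVertex (y : EuclideanSpace ℝ (Fin 3)) (i : Fin 3) :
    EuclideanSpace ℝ (Fin 3) :=
  WithLp.toLp 2 fun k => if k = i then 0 else if 0 ≤ y k then (√2)⁻¹ else -(√2)⁻¹

lemma signVertex_mem_cuboctahedron (y : EuclideanSpace ℝ (Fin 3)) (i : Fin 3) :
    signVertex y i ∈ cuboctahedron := by
  refine ⟨i, by simp [signVertex], fun j hj => ?_⟩
  simp only [signVertex, PiLp.toLp_apply, if_neg hj]
  split_ifs <;> simp

lemma inner_signVertex (y : EuclideanSpace ℝ (Fin 3)) (i : Fin 3) :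
    ⟪signVertex y i, y⟫ = (√2)⁻¹ * (∑ k, |y k| - |y i|) := by
  have hterm : ∀ k, ⟪signVertex y i k, y k⟫ =
      (√2)⁻¹ * |y k| - if k = i then (√2)⁻¹ * |y k| else 0 := by
    intro k
    simp only [Real.inner_apply, signVertex, PiLp.toLp_apply]
    split_ifs with hk hy
    · ring
    · rw [abs_of_nonneg hy]; ring
    · rw [abs_of_neg (not_le.1 hy)]; ring
  rw [PiLp.inner_apply, Finset.sum_congr rfl fun k _ => hterm k, Finset.sum_sub_distrib,
    Finset.sum_ite_eq', mul_sub, Finset.mul_sum]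
  simp

theorem exists_mem_cuboctahedron_half_lt_inner {y : EuclideanSpace ℝ (Fin 3)} (hy : ‖y‖ = 1) :
    ∃ x ∈ cuboctahedron, 1 / 2 < ⟪x, y⟫ := by
  by_contra! h
  have hsq : ∑ k, |y k| ^ 2 = 1 := by
    simpa [hy] using (EuclideanSpace.norm_sq_eq y).symm
  have hle : ∀ i, (∑ k, |y k| - |y i|) ^ 2 ≤ 1 / 2 := by
    intro i
    have hin := h _ (signVertex_mem_cuboctahedron y i)
    rw [inner_signVertex] at hin
    have hnonneg : 0 ≤ ∑ k, |y k| - |y i| :=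
      sub_nonneg.2 (Finset.single_le_sum (fun k _ => abs_nonneg (y k)) (Finset.mem_univ i))
    have hsq := pow_le_pow_left₀ (mul_nonneg (by positivity) hnonneg) hin 2
    rw [mul_pow, sq, inv_sqrt_two_mul_self] at hsq
    linarith
  rw [Fin.sum_univ_three] at hsq hle
  nlinarith [hle 0, hle 1, hle 2, abs_nonneg (y 0), abs_nonneg (y 1), abs_nonneg (y 2)]

/-- The cuboctahedron (vertex type `[3,4,3,4]`) inscribed in the unit sphere has maximum pairwise inner product `α = 1 / 2`,
and adjoining any new unit vector strictly increases the maximum pairwise inner product: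
every unit vector `y ∉ X` has `⟪x, y⟫ > α` for some vertex `x`. -/
theorem stmt_17 :
    IsGreatest {r : ℝ | ∃ x ∈ cuboctahedron, ∃ y ∈ cuboctahedron, x ≠ y ∧ ⟪x, y⟫ = r} (1 / 2) ∧
      ∀ y : EuclideanSpace ℝ (Fin 3), ‖y‖ = 1 → y ∉ cuboctahedron →
        ∃ x ∈ cuboctahedron, ⟪x, y⟫ > (1 / 2) := by
  refine ⟨⟨exists_mem_cuboctahedron_inner_eq_half, ?_⟩,
    fun y hy _ => exists_mem_cuboctahedron_half_lt_inner hy⟩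
  rintro r ⟨x, hx, y, hy, hxy, rfl⟩
  exact inner_le_half_of_mem_cuboctahedron hx hy hxy
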